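/- Let A be a commutative Banach algebra, I a dense ideal with A² + I = A, and let a₀ ∈ A∖I have a minimal-length representation a₀ = b₁c₁ + ⋯ + b_ncₙ + x with bᵢ, cᵢ ∈ A, x ∈ I. Then the ideal J = A♯a₀ + I is a proper ideal of A strictly containing I. -/

import Mathlib

/-- `M` is an ideal of the (non-unital) commutative algebra `A`. -/
def IsIdeal {A : Type*} [NonUnitalCommRing A] [Module ℂ A] (M : Submodule ℂ A) : Prop :=
  ∀ a : A, ∀ x ∈ M, a * x ∈ M

/-- `A²`: the linear span of all products `a * b`. -/
def sqIdeal (A : Type*) [NonUnitalCommRing A] [Module ℂ A] : Submodule ℂ A :=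
  Submodule.span ℂ {x : A | ∃ a b : A, x = a * b}

/-- The ideal `A♯ a₀ + I`, where `A♯ a₀ = ℂ a₀ + A a₀` is the ideal generated by `a₀`
in the unitization. -/
def genIdeal {A : Type*} [NonUnitalCommRing A] [Module ℂ A]
    (a₀ : A) (I : Submodule ℂ A) : Submodule ℂ A :=
  Submodule.span ℂ ({a₀} ∪ {y : A | ∃ x : A, y = x * a₀}) ⊔ I

/-!
Suppose `J = A♯a₀ + I` were all of `A`, and write `a₀ ≡ b₁c₁ + s (mod I)` with `s` a sum of
`n - 1` products. Then `b₁ ∈ J`, so `b₁ ≡ (λ + d)a₀ (mod I)`, which gives `(e - u)a₀ ≡ s` with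
`u = (λ + d)c₁`. Density of `I` lets us replace `u` by `v ∈ u + I` with `‖v‖ < 1`; then `e - v` is
invertible in `A♯`, with inverse `e + w`, so `a₀ ≡ (e + w)s (mod I)` is a sum of `n - 1` products
modulo `I`, contradicting the minimality of `n`.
-/

theorem exists_eq_add_mul_of_norm_lt_one {A : Type*} [NonUnitalNormedRing A] [CompleteSpace A]
    {v : A} (hv : ‖v‖ < 1) : ∃ w : A, w = v + v * w := by
  have hbound (k : ℕ) : ‖(v * ·)^[k] v‖ ≤ ‖v‖ * ‖v‖ ^ k := by
    induction k with
    | zero => simp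
    | succ k ih =>
      rw [Function.iterate_succ_apply', pow_succ', ← mul_assoc, mul_comm ‖v‖ ‖v‖, mul_assoc]
      exact (norm_mul_le _ _).trans (by gcongr)
  have hsum : Summable fun k => (v * ·)^[k] v :=
    .of_norm_bounded ((summable_geometric_of_lt_one (norm_nonneg v) hv).mul_left ‖v‖) hbound
  refine ⟨∑' k, (v * ·)^[k] v, ?_⟩
  conv_lhs => rw [hsum.tsum_eq_zero_add]
  simp only [Function.iterate_succ_apply', Function.iterate_zero_apply, hsum.tsum_mul_left]

section genIdeal

variable {A : Type*} [NonUnitalCommRing A] [Module ℂ A] {I : Submodule ℂ A} {a₀ : A}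

theorem self_mem_genIdeal : a₀ ∈ genIdeal a₀ I :=
  Submodule.mem_sup_left (Submodule.subset_span (Or.inl rfl))

theorem le_genIdeal : I ≤ genIdeal a₀ I := le_sup_right

theorem exists_sub_smul_add_mul_mem_of_mem_genIdeal [IsScalarTower ℂ A A] {a : A}
    (ha : a ∈ genIdeal a₀ I) : ∃ (l : ℂ) (d : A), a - (l • a₀ + d * a₀) ∈ I := by
  let f : ℂ × A →ₗ[ℂ] A := (LinearMap.toSpanSingleton ℂ A a₀).coprod (LinearMap.mulRight ℂ a₀)
  have hspan : Submodule.span ℂ ({a₀} ∪ {y | ∃ x, y = x * a₀}) ≤ LinearMap.range f := by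
    rw [Submodule.span_le]
    rintro y (rfl | ⟨d, rfl⟩)
    · exact ⟨(1, 0), by simp [f]⟩
    · exact ⟨(0, d), by simp [f]⟩
  obtain ⟨y, hy, z, hz, rfl⟩ := Submodule.mem_sup.mp ha
  obtain ⟨⟨l, d⟩, rfl⟩ := hspan hy
  exact ⟨l, d, by simpa [f] using hz⟩

/-- If `w` is the quasi-inverse of `v`, then `e + w` inverts `e - v` in `A♯`. -/
theorem sub_add_mul_mem_of_sub_mul_sub_mem (hI : IsIdeal I) {a s v w : A}
    (hw : w = v + v * w) (h : a - v * a - s ∈ I) : a - (s + w * s) ∈ I := by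
  have hwv : w * v = w - v := by
    rw [mul_comm]
    nth_rewrite 2 [hw]
    abel
  have heq : a - (s + w * s) = (a - v * a - s) + w * (a - v * a - s) := by
    rw [mul_sub, mul_sub, ← mul_assoc, hwv, sub_mul]
    abel
  rw [heq]
  exact I.add_mem h (hI w _ h)

end genIdeal

theorem exists_norm_lt_one_sub_mul_sub_mem {A : Type*} [NonUnitalNormedCommRing A]
    [NormedSpace ℂ A] [IsScalarTower ℂ A A] {I : Submodule ℂ A} (hI : IsIdeal I)
    (hdense : Dense (I : Set A)) {a₀ b₀ c₀ s : A} (hb₀ : b₀ ∈ genIdeal a₀ I)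
    (h : a₀ - (b₀ * c₀ + s) ∈ I) : ∃ v : A, ‖v‖ < 1 ∧ a₀ - v * a₀ - s ∈ I := by
  obtain ⟨l, d, hld⟩ := exists_sub_smul_add_mul_mem_of_mem_genIdeal hb₀
  set u := l • c₀ + d * c₀
  obtain ⟨j, hj, hdist⟩ := hdense.exists_dist_lt u one_pos
  refine ⟨u - j, by rwa [← dist_eq_norm], ?_⟩
  have hu : u * a₀ = (l • a₀ + d * a₀) * c₀ := by
    simp only [u, add_mul, smul_mul_assoc, mul_assoc, mul_comm c₀ a₀]
  have heq : a₀ - (u - j) * a₀ - s =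
      (a₀ - (b₀ * c₀ + s)) + c₀ * (b₀ - (l • a₀ + d * a₀)) + a₀ * j := by
    rw [sub_mul, hu, mul_comm c₀, mul_comm a₀, sub_mul]
    abel
  rw [heq]
  exact I.add_mem (I.add_mem h (hI c₀ _ hld)) (hI a₀ j hj)

theorem gen_ideal_proper_general
    {A : Type*} [NonUnitalNormedCommRing A] [NormedSpace ℂ A]
    [IsScalarTower ℂ A A] [CompleteSpace A]
    (I : Submodule ℂ A) (hI : IsIdeal I) (hdense : Dense (I : Set A))
    (n : ℕ) (a₀ : A) (ha₀ : a₀ ∉ I)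
    (b c : Fin n → A) (x : A) (hx : x ∈ I)
    (hrep : a₀ = (∑ i, b i * c i) + x)
    (hmin : ∀ (m : ℕ) (a : A), a ∉ I →
      (∃ (b' c' : Fin m → A) (x' : A), x' ∈ I ∧ a = (∑ i, b' i * c' i) + x') → n ≤ m) :
    I < genIdeal a₀ I ∧ genIdeal a₀ I ≠ ⊤ := by
  refine ⟨lt_of_le_of_ne le_genIdeal fun h => ha₀ (h ▸ self_mem_genIdeal), fun htop => ?_⟩
  obtain ⟨m, rfl⟩ : ∃ m, n = m + 1 :=
    Nat.exists_eq_succ_of_ne_zero fun hn => ha₀ (by subst hn; simpa [hrep] using hx)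
  set s := ∑ i : Fin m, b i.succ * c i.succ
  have hsplit : a₀ - (b 0 * c 0 + s) ∈ I := by
    rwa [hrep, Fin.sum_univ_succ, add_sub_cancel_left]
  obtain ⟨v, hv, hva⟩ :=
    exists_norm_lt_one_sub_mul_sub_mem hI hdense (htop ▸ Submodule.mem_top) hsplit
  obtain ⟨w, hw⟩ := exists_eq_add_mul_of_norm_lt_one hv
  have hshort : s + w * s = ∑ i : Fin m, (b i.succ + w * b i.succ) * c i.succ := by
    simp only [s, Finset.mul_sum, ← Finset.sum_add_distrib, add_mul, mul_assoc]
  have := hmin m a₀ ha₀ ⟨_, fun i => c i.succ, _,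
    sub_add_mul_mem_of_sub_mul_sub_mem hI hw hva, by rw [← hshort, add_sub_cancel]⟩
  omega

/-- Let `A` be a commutative Banach algebra, `I` a dense ideal with `A² + I = A`, and
`a₀ ∈ A ∖ I` having a representation `a₀ = b₁c₁ + ⋯ + bₙcₙ + x` (`x ∈ I`) with `n`
minimal among all elements of `A ∖ I` admitting such representations. Then
`J = A♯a₀ + I` is a proper ideal of `A` strictly containing `I`. -/
theorem gen_ideal_proper
    {A : Type*} [NonUnitalNormedCommRing A] [NormedSpace ℂ A]
    [IsScalarTower ℂ A A] [SMulCommClass ℂ A A] [CompleteSpace A]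
    (I : Submodule ℂ A) (hI : IsIdeal I) (hdense : Dense (I : Set A))
    (hsq : sqIdeal A ⊔ I = ⊤)
    (n : ℕ) (a₀ : A) (ha₀ : a₀ ∉ I)
    (b c : Fin n → A) (x : A) (hx : x ∈ I)
    (hrep : a₀ = (∑ i, b i * c i) + x)
    (hmin : ∀ (m : ℕ) (a : A), a ∉ I →
      (∃ (b' c' : Fin m → A) (x' : A), x' ∈ I ∧ a = (∑ i, b' i * c' i) + x') → n ≤ m) :
    I < genIdeal a₀ I ∧ genIdeal a₀ I ≠ ⊤ :=
  gen_ideal_proper_general I hI hdense n a₀ ha₀ b c x hx hrep hmin
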